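/- arXiv:2601.14166 — 3 statements merged into one kernel-verified Lean document; each statement's English description precedes it below -/
import Mathlib

section
/- Let r ≥ 1 and let k_1, …, k_r ≥ 1 be positive integers with k = k_1 + … + k_r. Then the product of binomial coefficients ∏_{j=1}^{r} C(k − 1 − (k_1 + … + k_{j−1}), k_j − 1) equals k! / ( ∏_{j=1}^{r} (k_j + k_{j+1} + … + k_r) · ∏_{j=1}^{r} (k_j − 1)! ). -/
/-!
With the suffix sums `S j = k j + … + k (r-1)`, the `j`-th binomial coefficient is
`C(S j - 1, k j - 1)`, and `C(S j - 1, k j - 1) · (k j - 1)! · (S (j+1))! · S j = (S j)!`.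
Multiplying over `j`, the factorials telescope to `(S 0)!`, the factorial of the total.
-/

open Finset Nat

theorem Nat.choose_pred_mul_factorial_mul_factorial_mul {a : ℕ} (ha : 0 < a) (n : ℕ) :
    (a + n - 1).choose (a - 1) * (a - 1)! * n ! * (a + n) = (a + n)! := by
  obtain ⟨m, rfl⟩ := Nat.exists_eq_add_of_lt ha
  rw [show 0 + m + 1 + n - 1 = m + n by omega, Nat.add_sub_cancel, zero_add, add_right_comm,
    choose_symm_add, factorial_succ, ← add_choose_mul_factorial_mul_factorial m n]
  ring

theorem Finset.sum_Iio_add_sum_Ici {α M : Type*} [Fintype α] [LinearOrder α]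
    [LocallyFiniteOrderBot α] [LocallyFiniteOrderTop α] [AddCommMonoid M] (f : α → M) (a : α) :
    ∑ x ∈ Iio a, f x + ∑ x ∈ Ici a, f x = ∑ x, f x := by
  rw [← sum_union (disjoint_left.2 fun x hx hx' => (mem_Iio.1 hx).not_ge (mem_Ici.1 hx'))]
  congr
  ext x
  simp [lt_or_ge]

theorem Fin.prod_choose_mul_prod_sum_Ici_mul_prod_factorial {r : ℕ} (k : Fin r → ℕ)
    (hk : ∀ j, 0 < k j) :
    (∏ j, (∑ i ∈ Ici j, k i - 1).choose (k j - 1)) * (∏ j, ∑ i ∈ Ici j, k i) *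
      ∏ j, (k j - 1)! = (∑ i, k i)! := by
  induction r with
  | zero => simp
  | succ r ih =>
    simp only [Fin.prod_univ_succ, Fin.sum_Ici_succ, Ici_zero_eq_univ, Fin.sum_univ_succ]
    rw [← Nat.choose_pred_mul_factorial_mul_factorial_mul (hk 0),
      ← ih (fun i => k i.succ) fun i => hk i.succ]
    ring

theorem stmt_0_general (r : ℕ) (k : Fin r → ℕ) (hk : ∀ j, 1 ≤ k j) :
    (∏ j : Fin r,
        (Nat.choose ((∑ i : Fin r, k i) - 1 - ∑ i ∈ Finset.Iio j, k i) (k j - 1) : ℝ)) =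
      (Nat.factorial (∑ i : Fin r, k i) : ℝ) /
        ((∏ j : Fin r, ((∑ i ∈ Finset.Ici j, k i : ℕ) : ℝ)) *
          ∏ j : Fin r, (Nat.factorial (k j - 1) : ℝ)) := by
  have key := Fin.prod_choose_mul_prod_sum_Ici_mul_prod_factorial k hk
  have hsub (j : Fin r) : (∑ i, k i) - 1 - ∑ i ∈ Iio j, k i = ∑ i ∈ Ici j, k i - 1 := by
    have := sum_Iio_add_sum_Ici k j
    omega
  have hden : (∏ j, ∑ i ∈ Ici j, k i) * ∏ j, (k j - 1)! ≠ 0 := by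
    have := factorial_ne_zero (∑ i, k i)
    rw [← key, mul_assoc] at this
    exact right_ne_zero_of_mul this
  simp only [hsub]
  rw [eq_div_iff (by exact_mod_cast hden), ← key]
  push_cast
  ring

/-- The ordering-factor identity: for positive integers `k 0, …, k (r-1)` summing to `K`,
the product of binomial coefficients `∏_j C(K - 1 - (k 0 + … + k (j-1)), k j - 1)` equals
`K! / (∏_j (k j + k (j+1) + … + k (r-1)) · ∏_j (k j - 1)!)`. -/
theorem stmt_0 (r : ℕ) (hr : 1 ≤ r) (k : Fin r → ℕ) (hk : ∀ j, 1 ≤ k j) :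
    (∏ j : Fin r,
        (Nat.choose ((∑ i : Fin r, k i) - 1 - ∑ i ∈ Finset.Iio j, k i) (k j - 1) : ℝ)) =
      (Nat.factorial (∑ i : Fin r, k i) : ℝ) /
        ((∏ j : Fin r, ((∑ i ∈ Finset.Ici j, k i : ℕ) : ℝ)) *
          ∏ j : Fin r, (Nat.factorial (k j - 1) : ℝ)) :=
  stmt_0_general r k hk
end

section
/- Define a sequence C(d) of real numbers for d ≥ 1 by C(1) = (√2 − 1) / (2^{3/4} √π) and, for d ≥ 2, C(d) = 2^{1/4 − d/2} · √( (√2 − 1) · C(d−1) · Γ(1 − 2^{1−d}) ) / Γ(1 − 2^{−d}). Then for every d ≥ 1 one has C(d) = (√2 − 1) · 2^{3/2 − d − 5·2^{−(d+1)}} / Γ(1 − 2^{−d}), where Γ denotes the real Gamma function. -/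
/-- If `C 1 = (√2 − 1)/(2^{3/4} √π)` and, for `d ≥ 2`,
`C d = 2^{1/4 − d/2} · √((√2 − 1) · C (d−1) · Γ(1 − 2^{1−d})) / Γ(1 − 2^{−d})`, then
`C d = (√2 − 1) · 2^{3/2 − d − 5·2^{−(d+1)}} / Γ(1 − 2^{−d})` for all `d ≥ 1`. -/
theorem stmt_13 (C : ℕ → ℝ)
    (hC1 : C 1 = (Real.sqrt 2 - 1) / ((2 : ℝ) ^ ((3 : ℝ) / 4) * Real.sqrt Real.pi))
    (hrec : ∀ d : ℕ, 2 ≤ d →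
      C d =
        (2 : ℝ) ^ ((1 : ℝ) / 4 - (d : ℝ) / 2) *
            Real.sqrt ((Real.sqrt 2 - 1) * C (d - 1) *
              Real.Gamma (1 - (2 : ℝ) ^ ((1 : ℝ) - (d : ℝ)))) /
          Real.Gamma (1 - (2 : ℝ) ^ (-(d : ℝ)))) :
    ∀ d : ℕ, 1 ≤ d →
      C d =
        (Real.sqrt 2 - 1) *
            (2 : ℝ) ^ ((3 : ℝ) / 2 - (d : ℝ) - 5 * (2 : ℝ) ^ (-((d : ℝ) + 1))) /
          Real.Gamma (1 - (2 : ℝ) ^ (-(d : ℝ))) := by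
  have h2 : (0:ℝ) < 2 := by norm_num
  have ha : (0:ℝ) < Real.sqrt 2 - 1 := by
    have : (1:ℝ) < Real.sqrt 2 := by
      have : (1:ℝ)^2 < 2 := by norm_num
      nlinarith [Real.sq_sqrt (show (0:ℝ) ≤ 2 by norm_num), Real.sqrt_nonneg 2]
    linarith
  intro d hd
  induction d, hd using Nat.le_induction with
  | base =>
    have hΓ : (1:ℝ) - (2:ℝ)^(-((1:ℕ):ℝ)) = 1/2 := by
      norm_num [Real.rpow_neg_one]
    rw [hC1]
    push_cast
    rw [show (1:ℝ) - (2:ℝ)^(-(1:ℝ)) = 1/2 by norm_num [Real.rpow_neg_one],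
        Real.Gamma_one_half_eq]
    have he : (3:ℝ)/2 - 1 - 5 * (2:ℝ)^(-((1:ℝ)+1)) = -(3/4) := by
      rw [show -((1:ℝ)+1) = -2 by norm_num]
      rw [show (2:ℝ)^(-(2:ℝ)) = ((2:ℝ)^((2:ℝ)))⁻¹ by rw [← Real.rpow_neg (by norm_num)]]
      rw [show (2:ℝ)^((2:ℝ)) = 4 by
        rw [show (2:ℝ) = ((2:ℕ):ℝ) by norm_num, Real.rpow_natCast]; norm_num]
      norm_num
    rw [he, Real.rpow_neg (by norm_num)]
    have hp : (0:ℝ) < (2:ℝ)^((3:ℝ)/4) := Real.rpow_pos_of_pos h2 _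
    have hπ : (0:ℝ) < Real.sqrt Real.pi := Real.sqrt_pos.mpr Real.pi_pos
    field_simp
  | succ n hn ih =>
    have hΓn : 0 < Real.Gamma (1 - (2:ℝ)^(-(n:ℝ))) := by
      apply Real.Gamma_pos_of_pos
      have hle : (2:ℝ)^(-(n:ℝ)) ≤ 1/2 := by
        rw [show (1:ℝ)/2 = (2:ℝ)^(-(1:ℝ)) by rw [Real.rpow_neg_one]; norm_num]
        apply Real.rpow_le_rpow_of_exponent_le one_le_two
        have : (1:ℝ) ≤ (n:ℝ) := by exact_mod_cast hn
        linarith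
      linarith
    rw [hrec (n+1) (by omega)]
    simp only [Nat.add_sub_cancel]
    rw [ih]
    have e1 : (1:ℝ) - ((n+1:ℕ):ℝ) = -(n:ℝ) := by push_cast; ring
    rw [e1]
    set E : ℝ := (3:ℝ)/2 - (n:ℝ) - 5 * (2:ℝ)^(-((n:ℝ)+1)) with hE
    have hs : Real.sqrt ((Real.sqrt 2 - 1) * ((Real.sqrt 2 - 1) * (2:ℝ)^E /
        Real.Gamma (1 - (2:ℝ)^(-(n:ℝ)))) * Real.Gamma (1 - (2:ℝ)^(-(n:ℝ))))
        = (Real.sqrt 2 - 1) * (2:ℝ)^(E/2) := by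
      have harg : (Real.sqrt 2 - 1) * ((Real.sqrt 2 - 1) * (2:ℝ)^E /
          Real.Gamma (1 - (2:ℝ)^(-(n:ℝ)))) * Real.Gamma (1 - (2:ℝ)^(-(n:ℝ)))
          = ((Real.sqrt 2 - 1) * (2:ℝ)^(E/2))^2 := by
        have : (2:ℝ)^(E/2) * (2:ℝ)^(E/2) = (2:ℝ)^E := by
          rw [← Real.rpow_add h2]; norm_num
        rw [mul_assoc, div_mul_cancel₀ _ hΓn.ne']
        calc (Real.sqrt 2 - 1) * ((Real.sqrt 2 - 1) * (2:ℝ)^E)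
            = (Real.sqrt 2 - 1) * (Real.sqrt 2 - 1) * ((2:ℝ)^(E/2) * (2:ℝ)^(E/2)) := by
              rw [this]; ring
          _ = ((Real.sqrt 2 - 1) * (2:ℝ)^(E/2))^2 := by ring
      rw [harg, Real.sqrt_sq (by positivity)]
    rw [hs]
    congr 1
    rw [show (2:ℝ)^((1:ℝ)/4 - ((n+1:ℕ):ℝ)/2) * ((Real.sqrt 2 - 1) * (2:ℝ)^(E/2))
        = (Real.sqrt 2 - 1) * ((2:ℝ)^((1:ℝ)/4 - ((n+1:ℕ):ℝ)/2) * (2:ℝ)^(E/2)) by ring,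
       ← Real.rpow_add h2]
    congr 1
    have h22 : (2:ℝ)^(-(((n:ℝ)+1)+1)) = (2:ℝ)^(-((n:ℝ)+1)) * (2:ℝ)^(-(1:ℝ)) := by
      rw [← Real.rpow_add h2]; congr 1; ring
    push_cast
    rw [h22, show (2:ℝ)^(-(1:ℝ)) = 1/2 by norm_num [Real.rpow_neg_one]]
    rw [hE]; ring
end

section
/- Let (v_i)_{i≥1} be nonnegative real numbers with ∑_{i≥1} v_i = 1, let (x_i)_{i≥1} and (y_i)_{i≥1} be injective sequences in [0,1], and let (μ_i)_{i≥1} be Borel probability measures on [0,1]² each having uniform marginals (i.e., the pushforward of μ_i under each coordinate projection is Lebesgue measure on [0,1]). For each i define the affine map A_i : [0,1]² → [0,1]², A_i(s,t) = ( ∑_{j : x_j < x_i} v_j + v_i s , ∑_{j : y_j < y_i} v_j + v_i t ). Then the measure μ = ∑_{i≥1} v_i · (A_i)_* μ_i is a Borel probability measure on [0,1]² with uniform marginals, i.e., μ([0,1] × [a,b]) = μ([a,b] × [0,1]) = b − a for all 0 ≤ a ≤ b ≤ 1. -/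
open MeasureTheory Set Function
open scoped Classical ENNReal

/-!
Project `ν` to either coordinate. The `i`-th summand becomes `v i` times the image of the uniform
law on `[0,1]` under `t ↦ d i + v i * t`, i.e. Lebesgue measure on `[d i, d i + v i]`, where `d i`
is the mass of the blocks placed before block `i`. Injectivity of the positions orders these
intervals, so they overlap only at endpoints; their lengths sum to `1` and they lie in `[0,1]`, so
they tile `[0,1]` up to a null set. Hence both marginals of `ν` are uniform, and a measure with
uniform marginals gives mass `b - a` to the strips `[0,1] × [a,b]` and `[a,b] × [0,1]`.
-/

noncomputable def massBelow {ι : Type*} (v y : ι → ℝ) (i : ι) : ℝ :=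
  ∑' j, if y j < y i then v j else 0

section Tiling

variable {ι : Type*} {v y : ι → ℝ}

theorem tsum_ite_add_le_tsum_ite (hv : ∀ i, 0 ≤ v i) (hvs : Summable v) {P Q : ι → Prop}
    [DecidablePred P] [DecidablePred Q] {i : ι} (hPQ : ∀ j, P j → Q j) (hPi : ¬P i) (hQi : Q i) :
    (∑' j, if P j then v j else 0) + v i ≤ ∑' j, if Q j then v j else 0 := by
  have summable_ite (R : ι → Prop) [DecidablePred R] : Summable fun j => if R j then v j else 0 :=
    hvs.of_nonneg_of_le (fun j => ite_nonneg (hv j) le_rfl)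
      (fun j => by split_ifs <;> simp [hv j])
  calc (∑' j, if P j then v j else 0) + v i
      = ∑' j, ((if P j then v j else 0) + if j = i then v j else 0) := by
        rw [(summable_ite P).tsum_add (summable_ite (· = i)), tsum_ite_eq]
    _ ≤ ∑' j, if Q j then v j else 0 := by
        refine (summable_ite P).add (summable_ite (· = i)) |>.tsum_le_tsum (fun j => ?_)
          (summable_ite Q)
        by_cases hj : j = i
        · subst hj; simp [hPi, hQi]
        · by_cases hPj : P j
          · simp [hj, hPj, hPQ]
          · simpa [hj, hPj] using ite_nonneg (hv j) le_rfl

theorem massBelow_nonneg (hv : ∀ i, 0 ≤ v i) (i : ι) : 0 ≤ massBelow v y i :=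
  tsum_nonneg fun j => ite_nonneg (hv j) le_rfl

theorem massBelow_add_le_massBelow (hv : ∀ i, 0 ≤ v i) (hvs : Summable v) {i k : ι}
    (hik : y i < y k) : massBelow v y i + v i ≤ massBelow v y k :=
  tsum_ite_add_le_tsum_ite hv hvs (fun _ hj => hj.trans hik) (lt_irrefl _) hik

theorem massBelow_add_le_tsum (hv : ∀ i, 0 ≤ v i) (hvs : Summable v) (i : ι) :
    massBelow v y i + v i ≤ ∑' j, v j := by
  unfold massBelow
  simpa using tsum_ite_add_le_tsum_ite (Q := fun _ => True) hv hvs (fun _ _ => trivial)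
    (lt_irrefl (y i)) trivial

theorem aedisjoint_Icc_of_le {a b c d : ℝ} (h : b ≤ c) :
    AEDisjoint volume (Icc a b) (Icc c d) :=
  measure_mono_null (fun _ ht => le_antisymm (ht.1.2.trans h) ht.2.1) (Real.volume_singleton (a := c))

theorem pairwise_aedisjoint_Icc_massBelow (hv : ∀ i, 0 ≤ v i) (hvs : Summable v)
    (hy : Injective y) :
    Pairwise (AEDisjoint volume on fun i => Icc (massBelow v y i) (massBelow v y i + v i)) := by
  intro i k hik
  rcases lt_or_gt_of_ne (hy.ne hik) with h | h
  · exact aedisjoint_Icc_of_le (massBelow_add_le_massBelow hv hvs h)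
  · exact (aedisjoint_Icc_of_le (massBelow_add_le_massBelow hv hvs h)).symm

theorem sum_volume_restrict_Icc_massBelow [Countable ι] (hv : ∀ i, 0 ≤ v i)
    (hsum : ∑' i, v i = 1) (hy : Injective y) :
    Measure.sum (fun i => volume.restrict (Icc (massBelow v y i) (massBelow v y i + v i)))
      = volume.restrict (Icc (0 : ℝ) 1) := by
  have hvs : Summable v := by
    by_contra h
    simp [tsum_eq_zero_of_not_summable h] at hsum
  have hdisj := pairwise_aedisjoint_Icc_massBelow hv hvs hy
  rw [← Measure.restrict_iUnion_ae hdisj fun _ => measurableSet_Icc.nullMeasurableSet]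
  refine Measure.restrict_congr_set (ae_eq_of_subset_of_measure_ge ?_ ?_
    (MeasurableSet.iUnion fun _ => measurableSet_Icc).nullMeasurableSet (by simp))
  · exact iUnion_subset fun i =>
      Icc_subset_Icc (massBelow_nonneg hv i) (hsum ▸ massBelow_add_le_tsum hv hvs i)
  · rw [measure_iUnion₀ hdisj fun _ => measurableSet_Icc.nullMeasurableSet]
    simp only [Real.volume_Icc, add_sub_cancel_left, sub_zero]
    rw [← ENNReal.ofReal_tsum_of_nonneg hv hvs, hsum]

end Tiling

theorem smul_map_volume_restrict_Icc_affine {d w : ℝ} (hw : 0 ≤ w) :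
    ENNReal.ofReal w • (volume.restrict (Icc (0 : ℝ) 1)).map (fun t => d + w * t)
      = volume.restrict (Icc d (d + w)) := by
  rcases hw.eq_or_lt with rfl | hw
  · simp
  have hf : MeasurableEmbedding fun t : ℝ => d + w * t :=
    (measurableEmbedding_addLeft d).comp (measurableEmbedding_mulLeft₀ hw.ne')
  have hpre : (fun t : ℝ => d + w * t) ⁻¹' Icc d (d + w) = Icc 0 1 := by
    ext t
    simp only [mem_preimage, mem_Icc, le_add_iff_nonneg_right, add_le_add_iff_left]
    rw [mul_nonneg_iff_of_pos_left hw, mul_le_iff_le_one_right hw]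
  have hmap : volume.map (fun t : ℝ => d + w * t) = ENNReal.ofReal w⁻¹ • volume := by
    rw [show (fun t : ℝ => d + w * t) = (d + ·) ∘ (w * ·) from rfl,
      ← Measure.map_map (measurable_const_add d) (measurable_const_mul w),
      Real.map_volume_mul_left hw.ne', Measure.map_smul, map_add_left_eq_self,
      abs_of_pos (inv_pos.2 hw)]
  rw [← hpre, ← hf.restrict_map, hmap, Measure.restrict_smul, smul_smul,
    ← ENNReal.ofReal_mul hw.le, mul_inv_cancel₀ hw.ne', ENNReal.ofReal_one, one_smul]

theorem map_sum_smul_map_eq_volume_restrict {ι X : Type*} [Countable ι] [MeasurableSpace X]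
    {v y : ι → ℝ} (hv : ∀ i, 0 ≤ v i) (hsum : ∑' i, v i = 1) (hy : Injective y)
    {μ : ι → Measure X} {π : X → ℝ} (hπ : Measurable π)
    (hμπ : ∀ i, (μ i).map π = volume.restrict (Icc (0 : ℝ) 1))
    {A : ι → X → X} (hA : ∀ i, Measurable (A i))
    (hπA : ∀ i p, π (A i p) = massBelow v y i + v i * π p) :
    (Measure.sum fun i => ENNReal.ofReal (v i) • (μ i).map (A i)).map π
      = volume.restrict (Icc (0 : ℝ) 1) := by
  rw [Measure.map_sum hπ.aemeasurable, ← sum_volume_restrict_Icc_massBelow hv hsum hy]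
  congr 1
  funext i
  have hcomp : π ∘ A i = (fun t => massBelow v y i + v i * t) ∘ π := funext (hπA i)
  rw [Measure.map_smul, Measure.map_map hπ (hA i), hcomp,
    ← Measure.map_map (by fun_prop) hπ, hμπ, smul_map_volume_restrict_Icc_affine (hv i)]

theorem measure_preimage_Icc_inter_preimage_Icc {X : Type*} [MeasurableSpace X] {ν : Measure X}
    {π₁ π₂ : X → ℝ} (hπ₁ : Measurable π₁) (hπ₂ : Measurable π₂)
    (h₁ : ν.map π₁ = volume.restrict (Icc (0 : ℝ) 1))
    (h₂ : ν.map π₂ = volume.restrict (Icc (0 : ℝ) 1)) {a b : ℝ} (ha : 0 ≤ a) (hb : b ≤ 1) :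
    ν (π₁ ⁻¹' Icc 0 1 ∩ π₂ ⁻¹' Icc a b) = ENNReal.ofReal (b - a) := by
  have hconull : ν (π₁ ⁻¹' Icc 0 1)ᶜ = 0 := by
    rw [← preimage_compl, ← Measure.map_apply hπ₁ measurableSet_Icc.compl, h₁,
      Measure.restrict_apply measurableSet_Icc.compl, compl_inter_self, measure_empty]
  rw [inter_comm, measure_inter_conull hconull, ← Measure.map_apply hπ₂ measurableSet_Icc, h₂,
    Measure.restrict_apply measurableSet_Icc, inter_eq_left.2 (Icc_subset_Icc ha hb),
    Real.volume_Icc]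

theorem stmt_14_general (v : ℕ → ℝ) (hv : ∀ i, 0 ≤ v i) (hsum : ∑' i, v i = 1)
    (x y : ℕ → ℝ) (hxinj : Function.Injective x) (hyinj : Function.Injective y)
    (μ : ℕ → Measure (ℝ × ℝ))
    (hfst : ∀ i, (μ i).map Prod.fst = volume.restrict (Set.Icc (0 : ℝ) 1))
    (hsnd : ∀ i, (μ i).map Prod.snd = volume.restrict (Set.Icc (0 : ℝ) 1))
    (A : ℕ → ℝ × ℝ → ℝ × ℝ)
    (hA : ∀ i p, A i p =
      ((∑' j : ℕ, if x j < x i then v j else 0) + v i * p.1,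
       (∑' j : ℕ, if y j < y i then v j else 0) + v i * p.2))
    (ν : Measure (ℝ × ℝ))
    (hν : ν = Measure.sum fun i => ENNReal.ofReal (v i) • (μ i).map (A i)) :
    IsProbabilityMeasure ν ∧
    ∀ a b : ℝ, 0 ≤ a → a ≤ b → b ≤ 1 →
      ν (Set.Icc (0 : ℝ) 1 ×ˢ Set.Icc a b) = ENNReal.ofReal (b - a) ∧
      ν (Set.Icc a b ×ˢ Set.Icc (0 : ℝ) 1) = ENNReal.ofReal (b - a) := by
  have hAm : ∀ i, Measurable (A i) := fun i => by rw [funext (hA i)]; fun_prop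
  have hνfst : ν.map Prod.fst = volume.restrict (Icc (0 : ℝ) 1) := hν ▸
    map_sum_smul_map_eq_volume_restrict hv hsum hxinj measurable_fst hfst hAm
      fun i p => by rw [hA]; rfl
  have hνsnd : ν.map Prod.snd = volume.restrict (Icc (0 : ℝ) 1) := hν ▸
    map_sum_smul_map_eq_volume_restrict hv hsum hyinj measurable_snd hsnd hAm
      fun i p => by rw [hA]; rfl
  have : IsProbabilityMeasure (ν.map Prod.fst) := ⟨by simp [hνfst]⟩
  refine ⟨Measure.isProbabilityMeasure_of_map Prod.fst, fun a b ha _ hb => ⟨?_, ?_⟩⟩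
  · rw [prod_eq]
    exact measure_preimage_Icc_inter_preimage_Icc measurable_fst measurable_snd hνfst hνsnd ha hb
  · rw [prod_eq, inter_comm]
    exact measure_preimage_Icc_inter_preimage_Icc measurable_snd measurable_fst hνsnd hνfst ha hb

/-- The Poisson–Dirichlet permuton construction yields a permuton: if `(v i)` are
nonnegative masses summing to `1`, `(x i)` and `(y i)` are injective sequences in `[0,1]`,
and each `μ i` is a probability measure on `[0,1]²` with uniform marginals, then the measure
`ν = ∑ i, v_i · (A_i)_* μ_i`, where
`A_i(s,t) = (∑_{j : x_j < x_i} v_j + v_i s, ∑_{j : y_j < y_i} v_j + v_i t)`,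
is a probability measure with uniform marginals:
`ν([0,1] × [a,b]) = ν([a,b] × [0,1]) = b − a` for all `0 ≤ a ≤ b ≤ 1`. -/
theorem stmt_14 (v : ℕ → ℝ) (hv : ∀ i, 0 ≤ v i) (hsum : ∑' i, v i = 1)
    (x y : ℕ → ℝ) (hxinj : Function.Injective x) (hyinj : Function.Injective y)
    (hx : ∀ i, x i ∈ Set.Icc (0 : ℝ) 1) (hy : ∀ i, y i ∈ Set.Icc (0 : ℝ) 1)
    (μ : ℕ → Measure (ℝ × ℝ)) (hμ : ∀ i, IsProbabilityMeasure (μ i))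
    (hfst : ∀ i, (μ i).map Prod.fst = volume.restrict (Set.Icc (0 : ℝ) 1))
    (hsnd : ∀ i, (μ i).map Prod.snd = volume.restrict (Set.Icc (0 : ℝ) 1))
    (A : ℕ → ℝ × ℝ → ℝ × ℝ)
    (hA : ∀ i p, A i p =
      ((∑' j : ℕ, if x j < x i then v j else 0) + v i * p.1,
       (∑' j : ℕ, if y j < y i then v j else 0) + v i * p.2))
    (ν : Measure (ℝ × ℝ))
    (hν : ν = Measure.sum fun i => ENNReal.ofReal (v i) • (μ i).map (A i)) :
    IsProbabilityMeasure ν ∧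
    ∀ a b : ℝ, 0 ≤ a → a ≤ b → b ≤ 1 →
      ν (Set.Icc (0 : ℝ) 1 ×ˢ Set.Icc a b) = ENNReal.ofReal (b - a) ∧
      ν (Set.Icc a b ×ˢ Set.Icc (0 : ℝ) 1) = ENNReal.ofReal (b - a) :=
  stmt_14_general v hv hsum x y hxinj hyinj μ hfst hsnd A hA ν hν
end
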